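/- arXiv:2211.17058 — 4 statements merged into one kernel-verified Lean document; each statement's English description precedes it below -/
import Mathlib

section
/- Herglotz variational principle, vakonomic version via Lagrange multipliers (for Q = ℝⁿ): Let L : ℝⁿ × ℝⁿ × ℝ → ℝ be a smooth Lagrangian and let c : [0,1] → ℝⁿ and ζ : [0,1] → ℝ be smooth with ζ'(t) = L(χ(t)) for all t ∈ [0,1], where χ(t) = (c(t), c'(t), ζ(t)). Then (c, ζ) satisfies the Herglotz equations if and only if there exists a C¹ function λ : [0,1] → ℝ with λ(1) = 1 such that for all t ∈ [0,1]: λ'(t) = −λ(t)·∂L/∂z(χ(t)), and for every index i, d/dt[λ(t)·∂L/∂vⁱ(χ(t))] = λ(t)·∂L/∂qⁱ(χ(t)). -/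
open Set

/-- Partial derivative of the Lagrangian `L(q, v, z)` with respect to `qⁱ`. -/
noncomputable def Lq {n : ℕ} (L : (Fin n → ℝ) × (Fin n → ℝ) × ℝ → ℝ) (i : Fin n)
    (p : (Fin n → ℝ) × (Fin n → ℝ) × ℝ) : ℝ :=
  fderiv ℝ L p (Pi.single i (1 : ℝ), 0, 0)

/-- Partial derivative of the Lagrangian `L(q, v, z)` with respect to `vⁱ`. -/
noncomputable def Lv {n : ℕ} (L : (Fin n → ℝ) × (Fin n → ℝ) × ℝ → ℝ) (i : Fin n)
    (p : (Fin n → ℝ) × (Fin n → ℝ) × ℝ) : ℝ :=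
  fderiv ℝ L p (0, Pi.single i (1 : ℝ), 0)

/-- Partial derivative of the Lagrangian `L(q, v, z)` with respect to `z`. -/
noncomputable def Lz {n : ℕ} (L : (Fin n → ℝ) × (Fin n → ℝ) × ℝ → ℝ)
    (p : (Fin n → ℝ) × (Fin n → ℝ) × ℝ) : ℝ :=
  fderiv ℝ L p (0, 0, 1)

/-- Herglotz variational principle, vakonomic version via Lagrange multipliers,
for `Q = ℝⁿ`. -/
theorem herglotz_principle_vakonomic (n : ℕ)
    (L : (Fin n → ℝ) × (Fin n → ℝ) × ℝ → ℝ) (hL : ContDiff ℝ (⊤ : ℕ∞) L)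
    (c : ℝ → Fin n → ℝ) (hc : ContDiff ℝ (⊤ : ℕ∞) c)
    (ζ : ℝ → ℝ) (hζ : ContDiff ℝ (⊤ : ℕ∞) ζ)
    (hode : ∀ t ∈ Icc (0 : ℝ) 1, deriv ζ t = L (c t, deriv c t, ζ t)) :
    -- Herglotz equations
    (∀ t ∈ Icc (0 : ℝ) 1, ∀ i : Fin n,
        deriv (fun s => Lv L i (c s, deriv c s, ζ s)) t
            - Lq L i (c t, deriv c t, ζ t)
          = Lv L i (c t, deriv c t, ζ t) * Lz L (c t, deriv c t, ζ t))
    ↔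
    -- existence of a Lagrange multiplier
    (∃ lam : ℝ → ℝ, ContDiff ℝ 1 lam ∧ lam 1 = 1 ∧
      (∀ t ∈ Icc (0 : ℝ) 1,
        deriv lam t = -lam t * Lz L (c t, deriv c t, ζ t)) ∧
      (∀ t ∈ Icc (0 : ℝ) 1, ∀ i : Fin n,
        deriv (fun s => lam s * Lv L i (c s, deriv c s, ζ s)) t
          = lam t * Lq L i (c t, deriv c t, ζ t))) := by
  -- Preliminaries: smoothness of the curve `χ` and of the composite partials.
  have hc' : ContDiff ℝ (⊤ : ℕ∞) (deriv c) := (contDiff_infty_iff_deriv.mp hc).2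
  have hχ : ContDiff ℝ (⊤ : ℕ∞) (fun t => (c t, deriv c t, ζ t)) :=
    ContDiff.prodMk hc (ContDiff.prodMk hc' hζ)
  have hfd : ContDiff ℝ (⊤ : ℕ∞) (fun p => fderiv ℝ L p) :=
    hL.fderiv_right (by exact_mod_cast le_top)
  -- the composite `Lv`-curve
  set F : Fin n → ℝ → ℝ := fun i s => Lv L i (c s, deriv c s, ζ s) with hFdef
  set g : ℝ → ℝ := fun s => Lz L (c s, deriv c s, ζ s) with hgdef
  have hF : ∀ i, ContDiff ℝ (⊤ : ℕ∞) (F i) := by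
    intro i
    have : ContDiff ℝ (⊤ : ℕ∞) (fun p => Lv L i p) :=
      hfd.clm_apply contDiff_const
    exact this.comp hχ
  have hg : ContDiff ℝ (⊤ : ℕ∞) g := by
    have : ContDiff ℝ (⊤ : ℕ∞) (fun p => Lz L p) :=
      hfd.clm_apply contDiff_const
    exact this.comp hχ
  have hFd : ∀ i t, HasDerivAt (F i) (deriv (F i) t) t := fun i t =>
    ((hF i).differentiable (by simp) t).hasDerivAt
  -- antiderivative of g
  set I : ℝ → ℝ := fun t => ∫ s in (0 : ℝ)..t, g s with hIdef
  have hgc : Continuous g := hg.continuous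
  have hI : ∀ t, HasDerivAt I (g t) t := by
    intro t
    exact intervalIntegral.integral_hasDerivAt_right
      (hgc.intervalIntegrable _ _)
      (hgc.stronglyMeasurableAtFilter _ _)
      hgc.continuousAt
  constructor
  · -- Herglotz ⇒ multiplier
    intro H
    refine ⟨fun t => Real.exp (I 1 - I t), ?_, by simp, ?_, ?_⟩
    · -- C¹
      have hdiff : Differentiable ℝ (fun t => Real.exp (I 1 - I t)) := by
        intro t
        exact (((hI t).const_sub (I 1)).exp).differentiableAt
      refine contDiff_one_iff_deriv.mpr ⟨hdiff, ?_⟩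
      have hderiv : (deriv fun t => Real.exp (I 1 - I t))
          = fun t => Real.exp (I 1 - I t) * (-g t) := by
        funext t
        have h1 : HasDerivAt (fun t => Real.exp (I 1 - I t))
            (Real.exp (I 1 - I t) * (-g t)) t := ((hI t).const_sub (I 1)).exp
        simpa using h1.deriv
      rw [hderiv]
      exact (Real.continuous_exp.comp (by fun_prop)).mul hgc.neg
    · -- ODE for lam
      intro t ht
      have h1 : HasDerivAt (fun t => Real.exp (I 1 - I t))
          (Real.exp (I 1 - I t) * (-g t)) t := ((hI t).const_sub (I 1)).exp
      rw [h1.deriv]; ring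
    · -- Euler–Lagrange for lam · Lv
      intro t ht i
      have hlam : HasDerivAt (fun t => Real.exp (I 1 - I t))
          (Real.exp (I 1 - I t) * (-g t)) t := ((hI t).const_sub (I 1)).exp
      have hprod : HasDerivAt (fun s => (fun t => Real.exp (I 1 - I t)) s * Lv L i (c s, deriv c s, ζ s))
          (Real.exp (I 1 - I t) * -g t * F i t + Real.exp (I 1 - I t) * deriv (F i) t) t :=
        hlam.mul (hFd i t)
      rw [hprod.deriv]
      have hH := H t ht i
      have hFderiv : deriv (F i) t = Lq L i (c t, deriv c t, ζ t) + F i t * g t := by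
        have := hH
        simp only [hFdef, hgdef] at *
        linarith
      rw [hFderiv]; ring
  · -- multiplier ⇒ Herglotz
    rintro ⟨lam, hlam1, hlam2, hlamode, hlamEL⟩ t ht i
    -- lam is differentiable
    have hlamd : ∀ s, HasDerivAt lam (deriv lam s) s := fun s =>
      ((hlam1.differentiable one_ne_zero) s).hasDerivAt
    -- show lam t ≠ 0 via the conserved quantity lam · exp(I)
    have hlamne : lam t ≠ 0 := by
      set h : ℝ → ℝ := fun s => lam s * Real.exp (I s) with hhdef
      have hconst : ∀ x ∈ Icc (0 : ℝ) 1, h x = h 0 := by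
        apply constant_of_has_deriv_right_zero
        · exact ((hlam1.continuous).mul (Real.continuous_exp.comp
            (by fun_prop))).continuousOn
        · intro x hx
          have hx' : x ∈ Icc (0 : ℝ) 1 := ⟨hx.1, hx.2.le⟩
          have hd : HasDerivAt h
              (deriv lam x * Real.exp (I x) + lam x * (Real.exp (I x) * g x)) x :=
            (hlamd x).mul ((hI x).exp)
          have : deriv lam x = -lam x * g x := hlamode x hx'
          rw [this] at hd
          have hd0 : HasDerivAt h 0 x := by
            convert hd using 1; ring
          exact hd0.hasDerivWithinAt
      have h1 : h 1 = h 0 := hconst 1 (by norm_num)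
      have h2 : h t = h 0 := hconst t ht
      have hne : h t ≠ 0 := by
        rw [h2, ← h1]
        simp [hhdef, hlam2, Real.exp_ne_zero]
      intro h0
      apply hne
      simp [hhdef, h0]
    -- product rule and conclusion
    have hprod : HasDerivAt (fun s => lam s * Lv L i (c s, deriv c s, ζ s))
        (deriv lam t * F i t + lam t * deriv (F i) t) t :=
      (hlamd t).mul (hFd i t)
    have hEL := hlamEL t ht i
    rw [hprod.deriv] at hEL
    rw [hlamode t ht] at hEL
    have hkey : lam t * (deriv (F i) t - Lq L i (c t, deriv c t, ζ t)
        - F i t * g t) = 0 := by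
      simp only [hFdef, hgdef] at *
      linarith [hEL]
    have := mul_eq_zero.mp hkey
    rcases this with h | h
    · exact absurd h hlamne
    · simp only [hFdef, hgdef] at *
      linarith
end

section
/- Herglotz variational principle, nonholonomic (Chetaev) version (for Q = ℝⁿ): Let L : ℝⁿ × ℝⁿ × ℝ → ℝ be a smooth Lagrangian and let c : [0,1] → ℝⁿ and ζ : [0,1] → ℝ be smooth with ζ'(t) = L(χ(t)) for all t ∈ [0,1], where χ(t) = (c(t), c'(t), ζ(t)). Then (c, ζ) satisfies the Herglotz equations if and only if for every C¹ map δq : [0,1] → ℝⁿ with δq(0) = δq(1) = 0, the first variation of the action vanishes along the Chetaev variation (δq, δz) with δz(t) = Σᵢ ∂L/∂vⁱ(χ(t))·δqⁱ(t); that is, ∫₀¹ [ Σᵢ ∂L/∂qⁱ(χ(t))·δqⁱ(t) + Σᵢ ∂L/∂vⁱ(χ(t))·(δqⁱ)'(t) + ∂L/∂z(χ(t))·δz(t) ] dt = 0. -/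
open Set intervalIntegral

/-- The Herglotz expression (which vanishes iff the Herglotz equations hold). -/
noncomputable def Ee {n : ℕ} (L : (Fin n → ℝ) × (Fin n → ℝ) × ℝ → ℝ)
    (c : ℝ → Fin n → ℝ) (ζ : ℝ → ℝ) (i : Fin n) (t : ℝ) : ℝ :=
  deriv (fun s => Lv L i (c s, deriv c s, ζ s)) t
    - Lq L i (c t, deriv c t, ζ t)
    - Lv L i (c t, deriv c t, ζ t) * Lz L (c t, deriv c t, ζ t)

/-- Fundamental lemma of the calculus of variations (one-sided version). -/
lemma fund_le (f : ℝ → ℝ) (hf : Continuous f)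
    (H : ∀ δ : ℝ → ℝ, ContDiff ℝ 1 δ → δ 0 = 0 → δ 1 = 0 →
      ∫ t in (0:ℝ)..1, f t * δ t = 0)
    {t₀ : ℝ} (ht₀ : t₀ ∈ Ioo (0:ℝ) 1) : f t₀ ≤ 0 := by
  by_contra hpos
  push_neg at hpos
  have hU : IsOpen (Ioo (0:ℝ) 1 ∩ f ⁻¹' Ioi (f t₀ / 2)) :=
    isOpen_Ioo.inter (isOpen_Ioi.preimage hf)
  have ht₀U : t₀ ∈ Ioo (0:ℝ) 1 ∩ f ⁻¹' Ioi (f t₀ / 2) :=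
    ⟨ht₀, by simp only [mem_preimage, mem_Ioi]; linarith⟩
  obtain ⟨ε, hε, hball⟩ := Metric.isOpen_iff.1 hU t₀ ht₀U
  set b : ContDiffBump t₀ := ⟨ε/2, ε, by positivity, by linarith⟩ with hb_def
  have hbr : b.rOut = ε := rfl
  have hbri : b.rIn = ε/2 := rfl
  have hzero : ∀ x, x ∉ Ioo (0:ℝ) 1 → (b : ℝ → ℝ) x = 0 := by
    intro x hx
    apply b.zero_of_le_dist
    rw [hbr]
    by_contra h
    push_neg at h
    exact hx (hball (Metric.mem_ball.2 h)).1
  have hδ1 : ContDiff ℝ 1 (b : ℝ → ℝ) := b.contDiff.of_le (by exact_mod_cast le_top)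
  have hI := H (b : ℝ → ℝ) hδ1
    (hzero 0 (by simp)) (hzero 1 (by simp))
  have hbnn : ∀ x, 0 ≤ (b : ℝ → ℝ) x := fun x => b.nonneg
  have hkey : ∀ t, f t₀ / 2 * (b : ℝ → ℝ) t ≤ f t * (b : ℝ → ℝ) t := by
    intro t
    rcases eq_or_lt_of_le (hbnn t) with h | h
    · rw [← h]; simp
    · have hsupp : t ∈ Function.support (b : ℝ → ℝ) := by
        simp only [Function.mem_support]; exact ne_of_gt h
      rw [b.support_eq, hbr] at hsupp
      have := (hball hsupp).2
      simp only [mem_preimage, mem_Ioi] at this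
      exact mul_le_mul_of_nonneg_right (le_of_lt this) (hbnn t)
  have hbint : ∀ u v : ℝ, IntervalIntegrable (b : ℝ → ℝ) MeasureTheory.volume u v :=
    fun u v => b.continuous.intervalIntegrable u v
  have hfbint : IntervalIntegrable (fun t => f t * (b : ℝ → ℝ) t) MeasureTheory.volume 0 1 :=
    (hf.mul b.continuous).intervalIntegrable 0 1
  have hmono : f t₀ / 2 * ∫ t in (0:ℝ)..1, (b : ℝ → ℝ) t
      ≤ ∫ t in (0:ℝ)..1, f t * (b : ℝ → ℝ) t := by
    rw [← intervalIntegral.integral_const_mul]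
    exact intervalIntegral.integral_mono (by norm_num)
      ((continuous_const.mul b.continuous).intervalIntegrable 0 1) hfbint hkey
  have haI : t₀ - ε/2 ∈ Ioo (0:ℝ) 1 := by
    refine (hball ?_).1
    rw [Metric.mem_ball, Real.dist_eq, show t₀ - ε/2 - t₀ = -(ε/2) by ring,
      abs_neg, abs_of_nonneg (by linarith)]
    linarith
  have hbI : t₀ + ε/2 ∈ Ioo (0:ℝ) 1 := by
    refine (hball ?_).1
    rw [Metric.mem_ball, Real.dist_eq, show t₀ + ε/2 - t₀ = ε/2 by ring,
      abs_of_nonneg (by linarith)]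
    linarith
  have hone : ∀ x ∈ Icc (t₀ - ε/2) (t₀ + ε/2), (b : ℝ → ℝ) x = 1 := by
    intro x hx
    apply b.one_of_mem_closedBall
    rw [Metric.mem_closedBall, Real.dist_eq, hbri, abs_le]
    exact ⟨by linarith [hx.1], by linarith [hx.2]⟩
  have hmid : ∫ t in (t₀ - ε/2)..(t₀ + ε/2), (b : ℝ → ℝ) t = ε := by
    rw [intervalIntegral.integral_congr (g := fun _ => (1:ℝ))
      (fun x hx => hone x (by rwa [uIcc_of_le (by linarith)] at hx))]
    simp
  have hsplit : ∫ t in (0:ℝ)..1, (b : ℝ → ℝ) t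
      = (∫ t in (0:ℝ)..(t₀ - ε/2), (b : ℝ → ℝ) t)
        + (∫ t in (t₀ - ε/2)..(t₀ + ε/2), (b : ℝ → ℝ) t)
        + (∫ t in (t₀ + ε/2)..(1:ℝ), (b : ℝ → ℝ) t) := by
    rw [intervalIntegral.integral_add_adjacent_intervals (hbint _ _) (hbint _ _),
      intervalIntegral.integral_add_adjacent_intervals (hbint _ _) (hbint _ _)]
  have hnn1 : 0 ≤ ∫ t in (0:ℝ)..(t₀ - ε/2), (b : ℝ → ℝ) t :=
    intervalIntegral.integral_nonneg (by linarith [haI.1]) (fun u _ => hbnn u)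
  have hnn2 : 0 ≤ ∫ t in (t₀ + ε/2)..(1:ℝ), (b : ℝ → ℝ) t :=
    intervalIntegral.integral_nonneg (by linarith [hbI.2]) (fun u _ => hbnn u)
  have hIb : ε ≤ ∫ t in (0:ℝ)..1, (b : ℝ → ℝ) t := by
    rw [hsplit, hmid]; linarith
  have : 0 < f t₀ / 2 * ∫ t in (0:ℝ)..1, (b : ℝ → ℝ) t :=
    mul_pos (by linarith) (by linarith)
  linarith [hmono, hI.ge, hI.le]

/-- Fundamental lemma of the calculus of variations. -/
lemma fund (f : ℝ → ℝ) (hf : Continuous f)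
    (H : ∀ δ : ℝ → ℝ, ContDiff ℝ 1 δ → δ 0 = 0 → δ 1 = 0 →
      ∫ t in (0:ℝ)..1, f t * δ t = 0) :
    ∀ t ∈ Ioo (0:ℝ) 1, f t = 0 := by
  intro t ht
  have h1 := fund_le f hf H ht
  have h2 := fund_le (fun s => -f s) hf.neg (fun δ hδ h0 h1' => by
    simp only [neg_mul]
    rw [intervalIntegral.integral_neg, H δ hδ h0 h1', neg_zero]) ht
  simp only [neg_nonpos] at h2
  linarith

/-- Herglotz variational principle, nonholonomic (Chetaev) version, for `Q = ℝⁿ`. -/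
theorem herglotz_principle_nonholonomic (n : ℕ)
    (L : (Fin n → ℝ) × (Fin n → ℝ) × ℝ → ℝ) (hL : ContDiff ℝ (⊤ : ℕ∞) L)
    (c : ℝ → Fin n → ℝ) (hc : ContDiff ℝ (⊤ : ℕ∞) c)
    (ζ : ℝ → ℝ) (hζ : ContDiff ℝ (⊤ : ℕ∞) ζ)
    (hode : ∀ t ∈ Icc (0 : ℝ) 1, deriv ζ t = L (c t, deriv c t, ζ t)) :
    -- Herglotz equations
    (∀ t ∈ Icc (0 : ℝ) 1, ∀ i : Fin n,
        deriv (fun s => Lv L i (c s, deriv c s, ζ s)) t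
            - Lq L i (c t, deriv c t, ζ t)
          = Lv L i (c t, deriv c t, ζ t) * Lz L (c t, deriv c t, ζ t))
    ↔
    -- vanishing of the first variation along all Chetaev variations
    (∀ δq : ℝ → Fin n → ℝ, ContDiff ℝ 1 δq → δq 0 = 0 → δq 1 = 0 →
      (∫ t in (0 : ℝ)..1,
          ((∑ i : Fin n, Lq L i (c t, deriv c t, ζ t) * δq t i)
            + (∑ i : Fin n, Lv L i (c t, deriv c t, ζ t)
                * deriv (fun s => δq s i) t)
            + Lz L (c t, deriv c t, ζ t)
                * (∑ i : Fin n, Lv L i (c t, deriv c t, ζ t) * δq t i))) = 0) := by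
  -- smoothness setup
  have hdc : ContDiff ℝ (⊤ : ℕ∞) (deriv c) := (contDiff_infty_iff_deriv.1 hc).2
  have hχ : ContDiff ℝ (⊤ : ℕ∞) (fun t => (c t, deriv c t, ζ t)) :=
    hc.prodMk (hdc.prodMk hζ)
  have hfd : ContDiff ℝ (⊤ : ℕ∞) (fderiv ℝ L) := hL.fderiv_right (by exact_mod_cast le_top)
  have hPD : ∀ v : (Fin n → ℝ) × (Fin n → ℝ) × ℝ,
      ContDiff ℝ (⊤ : ℕ∞) (fun t => fderiv ℝ L (c t, deriv c t, ζ t) v) :=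
    fun v => (hfd.comp hχ).clm_apply contDiff_const
  have hLvC : ∀ i, ContDiff ℝ (⊤ : ℕ∞) (fun t => Lv L i (c t, deriv c t, ζ t)) :=
    fun i => hPD _
  have hLqC : ∀ i, Continuous (fun t => Lq L i (c t, deriv c t, ζ t)) :=
    fun i => (hPD _).continuous
  have hLzC : Continuous (fun t => Lz L (c t, deriv c t, ζ t)) := (hPD _).continuous
  have hdLvC : ∀ i, Continuous (deriv (fun t => Lv L i (c t, deriv c t, ζ t))) :=
    fun i => (hLvC i).continuous_deriv (by exact_mod_cast le_top)
  have hEcont : ∀ i, Continuous (Ee L c ζ i) := by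
    intro i
    unfold Ee
    exact ((hdLvC i).sub (hLqC i)).sub (((hLvC i).continuous).mul hLzC)
  -- key computation: the first variation equals minus the weighted Herglotz expression
  have key : ∀ δq : ℝ → Fin n → ℝ, ContDiff ℝ 1 δq → δq 0 = 0 → δq 1 = 0 →
      (∫ t in (0 : ℝ)..1,
          ((∑ i : Fin n, Lq L i (c t, deriv c t, ζ t) * δq t i)
            + (∑ i : Fin n, Lv L i (c t, deriv c t, ζ t)
                * deriv (fun s => δq s i) t)
            + Lz L (c t, deriv c t, ζ t)
                * (∑ i : Fin n, Lv L i (c t, deriv c t, ζ t) * δq t i)))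
        = - ∑ i : Fin n, ∫ t in (0:ℝ)..1, Ee L c ζ i t * δq t i := by
    intro δq hδq h0 h1
    have hδi : ∀ i, ContDiff ℝ 1 (fun s => δq s i) := fun i =>
      (contDiff_pi.1 hδq) i
    set g : Fin n → ℝ → ℝ := fun i t => Lv L i (c t, deriv c t, ζ t) * δq t i with hg_def
    have hg : ∀ i, ContDiff ℝ 1 (g i) := fun i =>
      ((hLvC i).of_le (by exact_mod_cast le_top)).mul (hδi i)
    have hderivg : ∀ i t, deriv (g i) t
        = deriv (fun s => Lv L i (c s, deriv c s, ζ s)) t * δq t i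
          + Lv L i (c t, deriv c t, ζ t) * deriv (fun s => δq s i) t := by
      intro i t
      exact deriv_fun_mul (((hLvC i).differentiable (by simp)).differentiableAt)
        (((hδi i).differentiable one_ne_zero).differentiableAt)
    have hpt : ∀ t,
        ((∑ i : Fin n, Lq L i (c t, deriv c t, ζ t) * δq t i)
            + (∑ i : Fin n, Lv L i (c t, deriv c t, ζ t)
                * deriv (fun s => δq s i) t)
            + Lz L (c t, deriv c t, ζ t)
                * (∑ i : Fin n, Lv L i (c t, deriv c t, ζ t) * δq t i))
          = ∑ i : Fin n, (deriv (g i) t - Ee L c ζ i t * δq t i) := by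
      intro t
      rw [Finset.mul_sum, ← Finset.sum_add_distrib, ← Finset.sum_add_distrib]
      refine Finset.sum_congr rfl fun i _ => ?_
      rw [hderivg i t]
      unfold Ee
      ring
    have hint1 : ∀ i, IntervalIntegrable (fun t => deriv (g i) t)
        MeasureTheory.volume 0 1 :=
      fun i => ((hg i).continuous_deriv le_rfl).intervalIntegrable 0 1
    have hint2 : ∀ i, IntervalIntegrable (fun t => Ee L c ζ i t * δq t i)
        MeasureTheory.volume 0 1 :=
      fun i => ((hEcont i).mul ((hδi i).continuous)).intervalIntegrable 0 1
    calc (∫ t in (0 : ℝ)..1,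
          ((∑ i : Fin n, Lq L i (c t, deriv c t, ζ t) * δq t i)
            + (∑ i : Fin n, Lv L i (c t, deriv c t, ζ t)
                * deriv (fun s => δq s i) t)
            + Lz L (c t, deriv c t, ζ t)
                * (∑ i : Fin n, Lv L i (c t, deriv c t, ζ t) * δq t i)))
        = ∫ t in (0:ℝ)..1, ∑ i : Fin n, (deriv (g i) t - Ee L c ζ i t * δq t i) := by
          exact intervalIntegral.integral_congr (fun t _ => hpt t)
      _ = ∑ i : Fin n, ∫ t in (0:ℝ)..1, (deriv (g i) t - Ee L c ζ i t * δq t i) := by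
          exact intervalIntegral.integral_finset_sum
            (fun i _ => (hint1 i).sub (hint2 i))
      _ = ∑ i : Fin n, ((∫ t in (0:ℝ)..1, deriv (g i) t)
            - ∫ t in (0:ℝ)..1, Ee L c ζ i t * δq t i) := by
          refine Finset.sum_congr rfl fun i _ => ?_
          exact intervalIntegral.integral_sub (hint1 i) (hint2 i)
      _ = - ∑ i : Fin n, ∫ t in (0:ℝ)..1, Ee L c ζ i t * δq t i := by
          rw [Finset.sum_sub_distrib]
          have : ∀ i : Fin n, (∫ t in (0:ℝ)..1, deriv (g i) t) = 0 := by
            intro i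
            rw [intervalIntegral.integral_deriv_eq_sub
              (fun x _ => ((hg i).differentiable one_ne_zero).differentiableAt) (hint1 i)]
            simp [hg_def, h0, h1]
          simp [this]
  constructor
  · -- Herglotz ⟹ vanishing first variation
    intro h δq hδq h0 h1
    rw [key δq hδq h0 h1]
    have : ∀ i : Fin n, (∫ t in (0:ℝ)..1, Ee L c ζ i t * δq t i) = 0 := by
      intro i
      rw [intervalIntegral.integral_congr (g := fun _ => (0:ℝ)) ?_]
      · simp
      · intro t ht
        rw [uIcc_of_le (by norm_num : (0:ℝ) ≤ 1)] at ht
        have hE : Ee L c ζ i t = 0 := by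
          have := h t ht i
          unfold Ee
          linarith
        simp [hE]
    simp [this]
  · -- vanishing first variation ⟹ Herglotz
    intro h t ht i
    have hIoo : ∀ s ∈ Ioo (0:ℝ) 1, Ee L c ζ i s = 0 := by
      apply fund _ (hEcont i)
      intro δ hδ hδ0 hδ1
      set δq : ℝ → Fin n → ℝ := fun s j => if j = i then δ s else 0 with hδq_def
      have hδqC : ContDiff ℝ 1 δq := by
        apply contDiff_pi.2
        intro j
        by_cases hj : j = i
        · simpa [hδq_def, hj] using hδ
        · simpa [hδq_def, hj] using (contDiff_const (c := (0:ℝ)))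
      have hδq0 : δq 0 = 0 := by
        funext j; simp [hδq_def, hδ0]
      have hδq1 : δq 1 = 0 := by
        funext j; simp [hδq_def, hδ1]
      have hh := h δq hδqC hδq0 hδq1
      rw [key δq hδqC hδq0 hδq1] at hh
      have hsum : ∑ j : Fin n, (∫ s in (0:ℝ)..1, Ee L c ζ j s * δq s j)
          = ∫ s in (0:ℝ)..1, Ee L c ζ i s * δ s := by
        rw [Finset.sum_eq_single i]
        · apply intervalIntegral.integral_congr
          intro s _
          simp [hδq_def]
        · intro j _ hj
          simp [hδq_def, hj]
        · simp
      rw [hsum] at hh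
      linarith
  -- extend from the open interval to the closed one by continuity
    have hclos : EqOn (Ee L c ζ i) (fun _ => (0:ℝ)) (Icc (0:ℝ) 1) := by
      rw [← closure_Ioo (by norm_num : (0:ℝ) ≠ 1)]
      exact Set.EqOn.closure (fun s hs => hIoo s hs) (hEcont i) continuous_const
    have hE0 : Ee L c ζ i t = 0 := hclos ht
    unfold Ee at hE0
    linarith
end

section
/- Non-equivalence of the nonholonomic and vakonomic Herglotz principles (counterexample): Let γₓ ∈ ℝ with γₓ ≠ 0 and consider the first-order field Lagrangian on ℝ² given by L(t, x, u, u_t, u_x, z^t, z^x) = (1/2)(u_t² + u_x²) − u·γₓ·z^x. Define the section u(t,x) = t, z^t(t,x) = t/2, z^x(t,x) = 0. Then: (1) the constraint holds, i.e. ∂_t z^t + ∂_x z^x = L(j(t,x)) for all (t,x); (2) the Herglotz field equations hold everywhere, i.e. ∂_t[∂L/∂u_t(j)] + ∂_x[∂L/∂u_x(j)] − ∂L/∂u(j) = ∂L/∂u_t(j)·∂L/∂z^t(j) + ∂L/∂u_x(j)·∂L/∂z^x(j) at every (t,x); (3) the closed action dependence condition fails everywhere: ∂_t[∂L/∂z^x(j(·))](t,x)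 = −γₓ ≠ 0 = ∂_x[∂L/∂z^t(j(·))](t,x). Hence this section is a solution of the nonholonomic Herglotz principle but not of the vakonomic one. -/
noncomputable section

/-- The Lagrangian `L = (1/2)(u_t² + u_x²) − u·γₓ·z^x`. -/
def Lag (γx t x u ut ux zt zx : ℝ) : ℝ := (1 / 2) * (ut ^ 2 + ux ^ 2) - u * γx * zx

/-- `∂L/∂u`. -/
def Lu (γx t x u ut ux zt zx : ℝ) : ℝ := deriv (fun s => Lag γx t x s ut ux zt zx) u

/-- `∂L/∂u_t`. -/
def Lut (γx t x u ut ux zt zx : ℝ) : ℝ := deriv (fun s => Lag γx t x u s ux zt zx) ut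

/-- `∂L/∂u_x`. -/
def Lux (γx t x u ut ux zt zx : ℝ) : ℝ := deriv (fun s => Lag γx t x u ut s zt zx) ux

/-- `∂L/∂z^t`. -/
def Lzt (γx t x u ut ux zt zx : ℝ) : ℝ := deriv (fun s => Lag γx t x u ut ux s zx) zt

/-- `∂L/∂z^x`. -/
def Lzx (γx t x u ut ux zt zx : ℝ) : ℝ := deriv (fun s => Lag γx t x u ut ux zt s) zx

/-- The field `u(t,x) = t`. -/
def uf : ℝ → ℝ → ℝ := fun t _ => t

/-- The action density `z^t(t,x) = t/2`. -/
def ztf : ℝ → ℝ → ℝ := fun t _ => t / 2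

/-- The action density `z^x(t,x) = 0`. -/
def zxf : ℝ → ℝ → ℝ := fun _ _ => 0

/-- `∂_t u` along the section. -/
def jut (t x : ℝ) : ℝ := deriv (fun s => uf s x) t

/-- `∂_x u` along the section. -/
def jux (t x : ℝ) : ℝ := deriv (fun s => uf t s) x

/-- A function `F` of the jet variables, evaluated along the first-jet
prolongation `j(t,x)` of the section `(uf, ztf, zxf)`. -/
def onJet (F : ℝ → ℝ → ℝ → ℝ → ℝ → ℝ → ℝ → ℝ) (t x : ℝ) : ℝ :=
  F t x (uf t x) (jut t x) (jux t x) (ztf t x) (zxf t x)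

lemma Lu_eq (γx t x u ut ux zt zx : ℝ) : Lu γx t x u ut ux zt zx = -(γx * zx) := by
  have : HasDerivAt (fun s => Lag γx t x s ut ux zt zx) (-(γx * zx)) u := by
    refine ((((hasDerivAt_id' u).mul_const γx).mul_const zx).const_sub _).congr_deriv ?_
    ring
  exact this.deriv

lemma Lut_eq (γx t x u ut ux zt zx : ℝ) : Lut γx t x u ut ux zt zx = ut := by
  have : HasDerivAt (fun s => Lag γx t x u s ux zt zx) ut ut := by
    refine ((((hasDerivAt_pow 2 ut).add_const _).const_mul _).sub_const _).congr_deriv ?_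
    norm_num
    ring
  exact this.deriv

lemma Lux_eq (γx t x u ut ux zt zx : ℝ) : Lux γx t x u ut ux zt zx = ux := by
  have : HasDerivAt (fun s => Lag γx t x u ut s zt zx) ux ux := by
    refine ((((hasDerivAt_pow 2 ux).const_add _).const_mul _).sub_const _).congr_deriv ?_
    norm_num
    ring
  exact this.deriv

lemma Lzt_eq (γx t x u ut ux zt zx : ℝ) : Lzt γx t x u ut ux zt zx = 0 :=
  deriv_const zt _

lemma Lzx_eq (γx t x u ut ux zt zx : ℝ) : Lzx γx t x u ut ux zt zx = -(u * γx) := by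
  have : HasDerivAt (fun s => Lag γx t x u ut ux zt s) (-(u * γx)) zx := by
    refine (((hasDerivAt_id' zx).const_mul (u * γx)).const_sub _).congr_deriv ?_
    ring
  exact this.deriv

lemma jut_eq (t x : ℝ) : jut t x = 1 := deriv_id t

lemma jux_eq (t x : ℝ) : jux t x = 0 := deriv_const x t

lemma onJet_Lag (γx : ℝ) : onJet (Lag γx) = fun _ _ => 1 / 2 := by
  funext t x
  simp [onJet, Lag, jut_eq, jux_eq, zxf]

lemma onJet_Lu (γx : ℝ) : onJet (Lu γx) = fun _ _ => 0 := by
  funext t x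
  simp [onJet, Lu_eq, zxf]

lemma onJet_Lut (γx : ℝ) : onJet (Lut γx) = fun _ _ => 1 := by
  funext t x
  simp [onJet, Lut_eq, jut_eq]

lemma onJet_Lux (γx : ℝ) : onJet (Lux γx) = fun _ _ => 0 := by
  funext t x
  simp [onJet, Lux_eq, jux_eq]

lemma onJet_Lzt (γx : ℝ) : onJet (Lzt γx) = fun _ _ => 0 := by
  funext t x
  simp [onJet, Lzt_eq]

lemma onJet_Lzx (γx : ℝ) : onJet (Lzx γx) = fun t _ => -(t * γx) := by
  funext t x
  simp [onJet, Lzx_eq, uf]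

/-- Non-equivalence of the nonholonomic and vakonomic Herglotz principles:
for `L = (1/2)(u_t² + u_x²) − uγₓz^x` with `γₓ ≠ 0`, the section
`u = t`, `z^t = t/2`, `z^x = 0` satisfies the constraint and the Herglotz
field equations, but the closed action dependence condition fails everywhere:
`∂_t[∂L/∂z^x ∘ j] = −γₓ ≠ 0 = ∂_x[∂L/∂z^t ∘ j]`. -/
theorem nonholonomic_vakonomic_not_equivalent (γx : ℝ) (hγx : γx ≠ 0) :
    -- (1) the constraint holds
    (∀ t x : ℝ,
      deriv (fun s => ztf s x) t + deriv (fun s => zxf t s) x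
        = onJet (Lag γx) t x) ∧
    -- (2) the Herglotz field equations hold everywhere
    (∀ t x : ℝ,
      deriv (fun s => onJet (Lut γx) s x) t
          + deriv (fun s => onJet (Lux γx) t s) x
          - onJet (Lu γx) t x
        = onJet (Lut γx) t x * onJet (Lzt γx) t x
          + onJet (Lux γx) t x * onJet (Lzx γx) t x) ∧
    -- (3) the closed action dependence condition fails everywhere
    (∀ t x : ℝ,
      deriv (fun s => onJet (Lzx γx) s x) t = -γx ∧
      -γx ≠ 0 ∧
      deriv (fun s => onJet (Lzt γx) t s) x = 0) := by
  simp only [onJet_Lag, onJet_Lu, onJet_Lut, onJet_Lux, onJet_Lzt, onJet_Lzx]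
  refine ⟨fun t x => ?_, fun t x => by simp, fun t x => ⟨by simp, neg_ne_zero.mpr hγx, by simp⟩⟩
  simp [ztf, zxf]

end
end

section
/- Dissipative Korteweg–De Vries equation from the higher-order Herglotz field equations: Let γ_t, γ_x ∈ ℝ be constants and consider the second-order field Lagrangian on ℝ² (coordinates (t,x), one field u) given by L = (1/2)·u_x·u_t + u_x³ − (1/2)·u_{xx}² − γ_t·z^t − γ_x·z^x. Define the operators T_t f = ∂_t f + γ_t·f and T_x f = ∂_x f + γ_x·f on smooth functions on ℝ². Then for every smooth u : ℝ² → ℝ and every point (t,x), the second-order Herglotz field equation for L along u, namely −T_t((1/2)·∂_x u) − T_x((1/2)·∂_t u + 3·(∂_x u)²) + T_x(T_x(−∂_x∂_x u)) = 0 at (t,x), holds if and only if ∂_t∂_x u + (1/2)(γ_x·∂_t u + γ_t·∂_x u) + 6·∂_x u·∂_x²u + 3·γ_x·(∂_x u)² + ∂_x⁴u + 2·γ_x·∂_x³u + γ_x²·∂_x²u = 0 at (t,x). -/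
noncomputable section

/-- The Herglotz operator `T_t f = ∂_t f + γ_t·f` on functions of `(t, x)`. -/
def Tt (γt : ℝ) (F : ℝ → ℝ → ℝ) : ℝ → ℝ → ℝ :=
  fun t x => deriv (fun s => F s x) t + γt * F t x

/-- The Herglotz operator `T_x f = ∂_x f + γ_x·f` on functions of `(t, x)`. -/
def Tx (γx : ℝ) (F : ℝ → ℝ → ℝ) : ℝ → ℝ → ℝ :=
  fun t x => deriv (fun s => F t s) x + γx * F t x

/-- `∂_t u`. -/
def ut (u : ℝ → ℝ → ℝ) : ℝ → ℝ → ℝ := fun t x => deriv (fun s => u s x) t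

/-- `∂_x u`. -/
def ux (u : ℝ → ℝ → ℝ) : ℝ → ℝ → ℝ := fun t x => deriv (fun s => u t s) x

/-- `∂_x² u`. -/
def uxx (u : ℝ → ℝ → ℝ) : ℝ → ℝ → ℝ := fun t x => deriv (fun s => ux u t s) x

/-- `∂_x³ u`. -/
def uxxx (u : ℝ → ℝ → ℝ) : ℝ → ℝ → ℝ := fun t x => deriv (fun s => uxx u t s) x

/-- `∂_x⁴ u`. -/
def uxxxx (u : ℝ → ℝ → ℝ) : ℝ → ℝ → ℝ := fun t x => deriv (fun s => uxxx u t s) x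

/-- `∂_t ∂_x u`. -/
def utx (u : ℝ → ℝ → ℝ) : ℝ → ℝ → ℝ := fun t x => deriv (fun s => ux u s x) t

lemma sliceX {g : ℝ × ℝ → ℝ} (hg : Differentiable ℝ g) (t x : ℝ) :
    HasDerivAt (fun s => g (t, s)) (fderiv ℝ g (t, x) (0, 1)) x :=
  (hg (t, x)).hasFDerivAt.comp_hasDerivAt x ((hasDerivAt_const x t).prodMk (hasDerivAt_id x))

lemma sliceT {g : ℝ × ℝ → ℝ} (hg : Differentiable ℝ g) (t x : ℝ) :
    HasDerivAt (fun s => g (s, x)) (fderiv ℝ g (t, x) (1, 0)) t :=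
  (hg (t, x)).hasFDerivAt.comp_hasDerivAt t ((hasDerivAt_id t).prodMk (hasDerivAt_const t x))

lemma smooth_diff {g : ℝ × ℝ → ℝ} (hg : ContDiff ℝ (⊤ : ℕ∞) g) : Differentiable ℝ g :=
  hg.differentiable (by simp)

lemma smooth_fd {g : ℝ × ℝ → ℝ} (hg : ContDiff ℝ (⊤ : ℕ∞) g) (v : ℝ × ℝ) :
    ContDiff ℝ (⊤ : ℕ∞) (fun p => fderiv ℝ g p v) :=
  (hg.fderiv_right (m := (⊤ : ℕ∞)) (by exact_mod_cast le_top)).clm_apply contDiff_const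

lemma fderiv_eval {g : ℝ × ℝ → ℝ} (hg : ContDiff ℝ (⊤ : ℕ∞) g) (v w : ℝ × ℝ) (q : ℝ × ℝ) :
    fderiv ℝ (fun p => fderiv ℝ g p v) q w = fderiv ℝ (fderiv ℝ g) q w v := by
  have hd : DifferentiableAt ℝ (fderiv ℝ g) q :=
    ((hg.fderiv_right (m := (⊤ : ℕ∞)) (by exact_mod_cast le_top)).differentiable
      (by simp)) q
  rw [fderiv_clm_apply hd (differentiableAt_const v)]
  simp

/-- Dissipative Korteweg–De Vries equation from the higher-order Herglotz field
equations for the Lagrangian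
`L = (1/2)u_x u_t + u_x³ − (1/2)u_{xx}² − γ_t z^t − γ_x z^x`. -/
theorem dissipative_KdV (γt γx : ℝ)
    (u : ℝ → ℝ → ℝ) (hu : ContDiff ℝ (⊤ : ℕ∞) (fun p : ℝ × ℝ => u p.1 p.2))
    (t x : ℝ) :
    -- the second-order Herglotz field equation for L along u
    (- Tt γt (fun a b => (1 / 2) * ux u a b) t x
        - Tx γx (fun a b => (1 / 2) * ut u a b + 3 * (ux u a b) ^ 2) t x
        + Tx γx (Tx γx (fun a b => - uxx u a b)) t x = 0)
    ↔
    -- the dissipative KdV equation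
    (utx u t x + (1 / 2) * (γx * ut u t x + γt * ux u t x)
        + 6 * ux u t x * uxx u t x + 3 * γx * (ux u t x) ^ 2
        + uxxxx u t x + 2 * γx * uxxx u t x + γx ^ 2 * uxx u t x = 0) := by
  set f : ℝ × ℝ → ℝ := fun p => u p.1 p.2 with hfdef
  have hf : ContDiff ℝ (⊤ : ℕ∞) f := hu
  set g0 : ℝ × ℝ → ℝ := fun p => fderiv ℝ f p (1, 0) with hg0def
  set g1 : ℝ × ℝ → ℝ := fun p => fderiv ℝ f p (0, 1) with hg1def
  have hg0 : ContDiff ℝ (⊤ : ℕ∞) g0 := smooth_fd hf _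
  have hg1 : ContDiff ℝ (⊤ : ℕ∞) g1 := smooth_fd hf _
  set g2 : ℝ × ℝ → ℝ := fun p => fderiv ℝ g1 p (0, 1) with hg2def
  have hg2 : ContDiff ℝ (⊤ : ℕ∞) g2 := smooth_fd hg1 _
  set g3 : ℝ × ℝ → ℝ := fun p => fderiv ℝ g2 p (0, 1) with hg3def
  have hg3 : ContDiff ℝ (⊤ : ℕ∞) g3 := smooth_fd hg2 _
  -- pointwise identities
  have hux : ∀ a b, ux u a b = g1 (a, b) := fun a b =>
    (sliceX (smooth_diff hf) a b).deriv
  have hut : ∀ a b, ut u a b = g0 (a, b) := fun a b =>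
    (sliceT (smooth_diff hf) a b).deriv
  have huxx : ∀ a b, uxx u a b = g2 (a, b) := by
    intro a b
    have h : (fun s => ux u a s) = fun s => g1 (a, s) := funext fun s => hux a s
    show deriv (fun s => ux u a s) b = _
    rw [h]
    exact (sliceX (smooth_diff hg1) a b).deriv
  have huxxx : ∀ a b, uxxx u a b = g3 (a, b) := by
    intro a b
    have h : (fun s => uxx u a s) = fun s => g2 (a, s) := funext fun s => huxx a s
    show deriv (fun s => uxx u a s) b = _
    rw [h]
    exact (sliceX (smooth_diff hg2) a b).deriv
  have huxxxx : uxxxx u t x = fderiv ℝ g3 (t, x) (0, 1) := by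
    have h : (fun s => uxxx u t s) = fun s => g3 (t, s) := funext fun s => huxxx t s
    show deriv (fun s => uxxx u t s) x = _
    rw [h]
    exact (sliceX (smooth_diff hg3) t x).deriv
  have hutx : utx u t x = fderiv ℝ g1 (t, x) (1, 0) := by
    have h : (fun s => ux u s x) = fun s => g1 (s, x) := funext fun s => hux s x
    show deriv (fun s => ux u s x) t = _
    rw [h]
    exact (sliceT (smooth_diff hg1) t x).deriv
  -- symmetry of second derivatives
  have hsym : fderiv ℝ g0 (t, x) (0, 1) = fderiv ℝ g1 (t, x) (1, 0) := by
    rw [hg0def, hg1def, fderiv_eval hf (1, 0) (0, 1) (t, x),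
      fderiv_eval hf (0, 1) (1, 0) (t, x)]
    exact (hf.contDiffAt.isSymmSndFDerivAt (by rw [minSmoothness_of_isRCLikeNormedField]; rw [show ((2:WithTop ℕ∞)) = ((2:ℕ∞) : WithTop ℕ∞) by rfl]; exact WithTop.coe_le_coe.mpr le_top)) (0, 1) (1, 0)
  -- compute the three deriv terms in the Herglotz expression
  have e1 : deriv (fun s => (1 / 2 : ℝ) * ux u s x) t = (1 / 2) * fderiv ℝ g1 (t, x) (1, 0) := by
    have h : (fun s => (1 / 2 : ℝ) * ux u s x) = fun s => (1 / 2 : ℝ) * g1 (s, x) :=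
      funext fun s => by rw [hux]
    rw [h]
    exact ((sliceT (smooth_diff hg1) t x).const_mul ((1 : ℝ) / 2)).deriv
  have e2 : deriv (fun s => (1 / 2 : ℝ) * ut u t s + 3 * (ux u t s) ^ 2) x
      = (1 / 2) * fderiv ℝ g0 (t, x) (0, 1)
        + 3 * ((2 : ℕ) * g1 (t, x) ^ 1 * g2 (t, x)) := by
    have h : (fun s => (1 / 2 : ℝ) * ut u t s + 3 * (ux u t s) ^ 2)
        = fun s => (1 / 2 : ℝ) * g0 (t, s) + 3 * (g1 (t, s)) ^ 2 :=
      funext fun s => by rw [hut, hux]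
    rw [h]
    exact (((sliceX (smooth_diff hg0) t x).const_mul ((1 : ℝ) / 2)).add
      (((sliceX (smooth_diff hg1) t x).pow 2).const_mul (3 : ℝ))).deriv
  have hC : ∀ b, deriv (fun s => - uxx u t s) b + γx * - uxx u t b
      = -g3 (t, b) + γx * -g2 (t, b) := by
    intro b
    have h : (fun s => - uxx u t s) = fun s => -(g2 (t, s)) := funext fun s => by rw [huxx]
    rw [h, show (fun s => -g2 (t, s)) = -(fun s => g2 (t, s)) from rfl, ((sliceX (smooth_diff hg2) t b).neg).deriv, huxx t b]
  have e4 : deriv (fun s => deriv (fun y => - uxx u t y) s + γx * - uxx u t s) x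
      = -(fderiv ℝ g3 (t, x) (0, 1)) + γx * -(g3 (t, x)) := by
    have h : (fun s => deriv (fun y => - uxx u t y) s + γx * - uxx u t s)
        = fun s => -(g3 (t, s)) + γx * -(g2 (t, s)) := funext fun s => hC s
    rw [h]
    exact (((sliceX (smooth_diff hg3) t x).neg).add
      (((sliceX (smooth_diff hg2) t x).neg).const_mul γx)).deriv
  simp only [Tt, Tx]
  rw [e1, e2, e4, hC x, hutx, hut, hux, huxx, huxxx, huxxxx]
  rw [hsym]
  constructor <;> intro h <;> nlinarith [h]


end
end
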